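/- arXiv:2109.07569 — 4 statements merged into one kernel-verified Lean document; each statement's English description precedes it below -/
import Mathlib

section
/- Let X be a set with a TSD operation T satisfying reversibility and additivity, A an abelian group, and ψ : X³ → A a function. Define on X × A the operation T̂((x,a),(y,b),(z,c)) := (T(x,y,z), a + ψ(x,y,z)). Then T̂ is ternary self-distributive if and only if ψ is a TSD 2-cocycle; moreover, T̂ satisfies reversibility and additivity if and only if ψ satisfies the reversibility and additivity conditions. -/
theorem extension_TSD_iff_cocycle {X : Type*} {A : Type*} [AddCommGroup A]
    (T : X → X → X → X)
    (hTSD : ∀ x y z u v, T (T x y z) u v = T (T x u v) (T y u v) (T z u v))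
    (hrev : ∀ w x y, T (T w x y) y x = w)
    (hadd : ∀ w x y z, T (T w x y) y z = T w x z)
    (ψ : X → X → X → A)
    (That : X × A → X × A → X × A → X × A)
    (hThat : ∀ p q r : X × A,
      That p q r = (T p.1 q.1 r.1, p.2 + ψ p.1 q.1 r.1)) :
    ((∀ p q r s t : X × A,
        That (That p q r) s t = That (That p s t) (That q s t) (That r s t)) ↔
      (∀ x y z u v : X,
        ψ x y z - ψ (T x u v) (T y u v) (T z u v) - ψ x u v + ψ (T x y z) u v = 0)) ∧
    ((∀ p q r : X × A, That (That p q r) r q = p) ↔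
      (∀ w x y : X, ψ w x y + ψ (T w x y) y x = 0)) ∧
    ((∀ p q r s : X × A, That (That p q r) r s = That p q s) ↔
      (∀ w x y z : X, ψ w x y + ψ (T w x y) y z = ψ w x z)) := by
  refine ⟨⟨?_, ?_⟩, ⟨?_, ?_⟩, ⟨?_, ?_⟩⟩
  · intro h x y z u v
    have h2 := congrArg Prod.snd (h (x, 0) (y, 0) (z, 0) (u, 0) (v, 0))
    simp only [hThat, zero_add] at h2
    have key : ψ x y z - ψ (T x u v) (T y u v) (T z u v) - ψ x u v + ψ (T x y z) u v
        = (ψ x y z + ψ (T x y z) u v) - (ψ x u v + ψ (T x u v) (T y u v) (T z u v)) := by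
      abel
    rw [key, h2, sub_self]
  · intro h p q r s t
    have h2 := h p.1 q.1 r.1 s.1 t.1
    have key : (ψ p.1 q.1 r.1 + ψ (T p.1 q.1 r.1) s.1 t.1)
        - (ψ p.1 s.1 t.1 + ψ (T p.1 s.1 t.1) (T q.1 s.1 t.1) (T r.1 s.1 t.1))
        = ψ p.1 q.1 r.1 - ψ (T p.1 s.1 t.1) (T q.1 s.1 t.1) (T r.1 s.1 t.1)
          - ψ p.1 s.1 t.1 + ψ (T p.1 q.1 r.1) s.1 t.1 := by abel
    rw [h2] at key
    have h3 := sub_eq_zero.mp key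
    simp only [hThat]
    exact Prod.ext (hTSD _ _ _ _ _) (by simp only [add_assoc, h3])
  · intro h w x y
    have h2 := congrArg Prod.snd (h (w, 0) (x, 0) (y, 0))
    simp only [hThat, zero_add] at h2
    exact h2
  · intro h p q r
    simp only [hThat]
    exact Prod.ext (hrev _ _ _) (by simp [add_assoc, h p.1 q.1 r.1])
  · intro h w x y z
    have h2 := congrArg Prod.snd (h (w, 0) (x, 0) (y, 0) (z, 0))
    simp only [hThat, zero_add] at h2
    exact h2
  · intro h p q r s
    simp only [hThat]
    exact Prod.ext (hadd _ _ _ _) (by rw [add_assoc, h p.1 q.1 r.1 s.1])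
end

section
/- For the cyclic group ℤ_n with heap operation T(x,y,z) = x − y + z (additive notation) and each i ∈ ℤ_n, the function φ_i : (ℤ_n)³ → ℤ_n defined by φ_i(x,y,z) = 1 if z − y = i and 0 otherwise, is a nondegenerate TSD 2-cocycle when i ≠ 0; i.e., it satisfies φ_i(x,y,z) − φ_i(x−u+v, y−u+v, z−u+v) − φ_i(x,u,v) + φ_i(x−y+z, u, v) = 0 and φ_i(x,y,y) = 0 for all x,y,z,u,v. -/
theorem phi_i_nondeg_cocycle (n : ℕ) (i : ZMod n) (hi : i ≠ 0)
    (φ : ZMod n → ZMod n → ZMod n → ZMod n)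
    (hφ : ∀ x y z, φ x y z = if z - y = i then 1 else 0) :
    (∀ x y z u v : ZMod n,
      φ x y z - φ (x - u + v) (y - u + v) (z - u + v) - φ x u v
        + φ (x - y + z) u v = 0) ∧
    (∀ x y : ZMod n, φ x y y = 0) := by
  constructor
  · intro x y z u v
    simp only [hφ]
    have h : z - u + v - (y - u + v) = z - y := by ring
    rw [h]
    ring
  · intro x y
    simp [hφ, sub_self, Ne.symm hi]
end

section
/- Let R be a (commutative) ring regarded as an abelian heap under x − y + z, and for a,b ∈ R define ψ_{(a,b)}(x,y,z) = (a·x + b·(z−y))·(z−y). Then ψ_{(a,b)} satisfies the additivity condition ψ(w,x,y) + ψ(w−x+y,y,z) = ψ(w,x,z) for all w,x,y,z ∈ R if and only if a = 2b. -/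
theorem psi_ab_additive_iff {R : Type*} [CommRing R] (a b : R)
    (ψ : R → R → R → R)
    (hψ : ∀ x y z, ψ x y z = (a * x + b * (z - y)) * (z - y)) :
    (∀ w x y z : R, ψ w x y + ψ (w - x + y) y z = ψ w x z) ↔ a = 2 * b := by
  constructor
  · intro h
    have h1 := h 0 0 1 2
    rw [hψ, hψ, hψ] at h1
    linear_combination h1
  · intro h w x y z
    rw [hψ, hψ, hψ, h]
    ring
end

section
/- Let R be a commutative ring, ψ_b(x,y,z) := (2b·x + b·(z−y))·(z−y) for b ∈ R, and similarly ψ_d for d ∈ R. Then the mutual distributivity identity ψ_b(x,y,z) + ψ_d(x−y+z,u,v) = ψ_b(x−u+v, y−u+v, z−u+v) + ψ_d(x,u,v) holds for all x,y,z,u,v ∈ R if and only if 2(b−d) = 0 in R. -/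
theorem psi_bd_mutually_distributive_iff {R : Type*} [CommRing R] (b d : R)
    (ψb ψd : R → R → R → R)
    (hb : ∀ x y z, ψb x y z = (2 * b * x + b * (z - y)) * (z - y))
    (hd : ∀ x y z, ψd x y z = (2 * d * x + d * (z - y)) * (z - y)) :
    (∀ x y z u v : R,
      ψb x y z + ψd (x - y + z) u v =
        ψb (x - u + v) (y - u + v) (z - u + v) + ψd x u v) ↔
    2 * (b - d) = 0 := by
  constructor
  · intro h
    have := h 0 0 1 0 1
    simp only [hb, hd] at this
    linear_combination -this
  · intro h x y z u v
    simp only [hb, hd]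
    linear_combination (z - y) * (u - v) * h
end
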